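/- Let σ be convex Lipschitz and C¹, H continuous, and u(t,x) = max_q {⟨x,q⟩ - σ*(q) - ∫₀ᵗ H(τ,q)dτ}. Suppose every sequence (t_k,x_k) → (t₀,x₀) of points where u is differentiable satisfies ∇ₓu(t_k,x_k) = q_k ∈ ℓ(t_k,x_k) and ∂ₜu(t_k,x_k) = -H(t_k,q_k). Then D*u(t₀,x₀) ⊆ {(-H(t₀,q), q) : q ∈ ℓ(t₀,x₀)}. -/
import Mathlib


local notation "⟪" x ", " y "⟫" => @inner ℝ _ _ x y

/-- The Fenchel (Legendre) conjugate of `σ`, with values in `EReal`. -/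
noncomputable def fenchelConj {n : ℕ} (σ : EuclideanSpace ℝ (Fin n) → ℝ)
    (q : EuclideanSpace ℝ (Fin n)) : EReal :=
  ⨆ x : EuclideanSpace ℝ (Fin n), ((⟪x, q⟫ - σ x : ℝ) : EReal)

/-- The Hopf functional `φ(t,x,q) = ⟨x,q⟩ - σ*(q) - ∫₀ᵗ H(τ,q) dτ` (`EReal`-valued). -/
noncomputable def hopfPhi {n : ℕ} (σ : EuclideanSpace ℝ (Fin n) → ℝ)
    (H : ℝ → EuclideanSpace ℝ (Fin n) → ℝ) (t : ℝ)
    (x q : EuclideanSpace ℝ (Fin n)) : EReal :=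
  ((⟪x, q⟫ - ∫ τ in (0:ℝ)..t, H τ q : ℝ) : EReal) - fenchelConj σ q

/-- The set `ℓ(t,x)` of maximizers over `q ∈ ℝⁿ` of `φ(t,x,·)`. -/
def hopfArgmax {n : ℕ} (σ : EuclideanSpace ℝ (Fin n) → ℝ)
    (H : ℝ → EuclideanSpace ℝ (Fin n) → ℝ) (t : ℝ)
    (x : EuclideanSpace ℝ (Fin n)) : Set (EuclideanSpace ℝ (Fin n)) :=
  {q | ∀ q', hopfPhi σ H t x q' ≤ hopfPhi σ H t x q}

open Filter

/-- The set of reachable gradients `D*u(z₀)` of `u` at `z₀`, as a set of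
continuous linear maps (derivatives). -/
def reachableGradients {n : ℕ} (Ω : Set (ℝ × EuclideanSpace ℝ (Fin n)))
    (u : ℝ × EuclideanSpace ℝ (Fin n) → ℝ)
    (z₀ : ℝ × EuclideanSpace ℝ (Fin n)) :
    Set ((ℝ × EuclideanSpace ℝ (Fin n)) →L[ℝ] ℝ) :=
  {p | ∃ z : ℕ → ℝ × EuclideanSpace ℝ (Fin n),
    (∀ k, z k ∈ Ω ∧ z k ≠ z₀ ∧ DifferentiableAt ℝ u (z k)) ∧
    Tendsto z atTop (nhds z₀) ∧
    Tendsto (fun k => fderiv ℝ u (z k)) atTop (nhds p)}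

/-- The derivative pair `(-H(t,q), q)` as a continuous linear map on `ℝ × ℝⁿ`. -/
noncomputable def derivPair {n : ℕ} (a : ℝ) (q : EuclideanSpace ℝ (Fin n)) :
    (ℝ × EuclideanSpace ℝ (Fin n)) →L[ℝ] ℝ :=
  a • (ContinuousLinearMap.fst ℝ ℝ (EuclideanSpace ℝ (Fin n))) +
    (innerSL ℝ q).comp (ContinuousLinearMap.snd ℝ ℝ (EuclideanSpace ℝ (Fin n)))

lemma derivPair_apply {n : ℕ} (a : ℝ) (q : EuclideanSpace ℝ (Fin n)) (v : ℝ)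
    (w : EuclideanSpace ℝ (Fin n)) : derivPair a q (v, w) = a * v + ⟪q, w⟫ := by
  simp [derivPair]

lemma fenchelConj_ne_bot {n : ℕ} (σ : EuclideanSpace ℝ (Fin n) → ℝ)
    (q : EuclideanSpace ℝ (Fin n)) : fenchelConj σ q ≠ ⊥ := by
  have h : ((⟪(0 : EuclideanSpace ℝ (Fin n)), q⟫ - σ 0 : ℝ) : EReal) ≤ fenchelConj σ q :=
    le_iSup (fun x : EuclideanSpace ℝ (Fin n) => ((⟪x, q⟫ - σ x : ℝ) : EReal)) 0
  exact fun hb => by simp [hb] at h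

lemma fenchelConj_lsc {n : ℕ} (σ : EuclideanSpace ℝ (Fin n) → ℝ) :
    LowerSemicontinuous (fenchelConj σ) := by
  apply lowerSemicontinuous_iSup
  intro x
  exact (continuous_coe_real_ereal.comp
    ((Continuous.inner continuous_const continuous_id).sub continuous_const)).lowerSemicontinuous

lemma derivPair_continuous {n : ℕ} :
    Continuous (fun p : ℝ × EuclideanSpace ℝ (Fin n) => derivPair p.1 p.2) := by
  unfold derivPair
  exact (continuous_fst.smul continuous_const).add
    (((innerSL ℝ).continuous.comp continuous_snd).clm_comp continuous_const)

theorem stmt15 {n : ℕ} (T : ℝ) (hT : 0 < T) (L : NNReal)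
    (σ : EuclideanSpace ℝ (Fin n) → ℝ)
    (hconv : ConvexOn ℝ Set.univ σ) (hσ : ContDiff ℝ 1 σ)
    (hlip : LipschitzWith L σ)
    (H : ℝ → EuclideanSpace ℝ (Fin n) → ℝ)
    (hH : Continuous (fun p : ℝ × EuclideanSpace ℝ (Fin n) => H p.1 p.2))
    (u : ℝ × EuclideanSpace ℝ (Fin n) → ℝ)
    (hu : ∀ t ∈ Set.Icc (0:ℝ) T, ∀ x,
      IsGreatest (Set.range (hopfPhi σ H t x)) ((u (t, x) : ℝ) : EReal))
    -- at every point of differentiability, the derivative is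
    -- (∂ₜu, ∇ₓu) = (-H(t,q), q) for some maximizer q ∈ ℓ(t,x):
    (hd : ∀ z ∈ Set.Ioo (0:ℝ) T ×ˢ (Set.univ : Set (EuclideanSpace ℝ (Fin n))),
      DifferentiableAt ℝ u z →
        ∃ q ∈ hopfArgmax σ H z.1 z.2, fderiv ℝ u z = derivPair (-(H z.1 q)) q)
    (t₀ : ℝ) (x₀ : EuclideanSpace ℝ (Fin n)) (ht₀ : t₀ ∈ Set.Ioo 0 T) :
    reachableGradients (Set.Ioo (0:ℝ) T ×ˢ Set.univ) u (t₀, x₀) ⊆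
      {P | ∃ q ∈ hopfArgmax σ H t₀ x₀, P = derivPair (-(H t₀ q)) q} := by
  classical
  intro P hP
  obtain ⟨z, hz, hzt, hzd⟩ := hP
  choose q hqmem hqd using fun k => hd (z k) (hz k).1 (hz k).2.2
  have htk : Tendsto (fun k => (z k).1) atTop (nhds t₀) :=
    (continuous_fst.tendsto _).comp hzt
  set Q : EuclideanSpace ℝ (Fin n) := (InnerProductSpace.toDual ℝ _).symm
      (P.comp (ContinuousLinearMap.inr ℝ ℝ (EuclideanSpace ℝ (Fin n)))) with hQdef
  have hrec : ∀ (a : ℝ) (q' : EuclideanSpace ℝ (Fin n)),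
      (InnerProductSpace.toDual ℝ (EuclideanSpace ℝ (Fin n))).symm
        ((derivPair a q').comp (ContinuousLinearMap.inr ℝ ℝ (EuclideanSpace ℝ (Fin n)))) = q' := by
    intro a q'
    have h : (derivPair a q').comp (ContinuousLinearMap.inr ℝ ℝ (EuclideanSpace ℝ (Fin n)))
        = InnerProductSpace.toDual ℝ (EuclideanSpace ℝ (Fin n)) q' := by
      ext w
      rw [ContinuousLinearMap.comp_apply, ContinuousLinearMap.inr_apply, derivPair_apply,
        InnerProductSpace.toDual_apply_apply]
      ring
    rw [h, LinearIsometryEquiv.symm_apply_apply]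
  have hqt : Tendsto q atTop (nhds Q) := by
    have hcont : Continuous fun P' : (ℝ × EuclideanSpace ℝ (Fin n)) →L[ℝ] ℝ =>
        (InnerProductSpace.toDual ℝ (EuclideanSpace ℝ (Fin n))).symm
          (P'.comp (ContinuousLinearMap.inr ℝ ℝ (EuclideanSpace ℝ (Fin n)))) :=
      (InnerProductSpace.toDual ℝ (EuclideanSpace ℝ (Fin n))).symm.continuous.comp
        (continuous_id.clm_comp continuous_const)
    have h2 := (hcont.tendsto P).comp hzd
    refine h2.congr fun k => ?_
    rw [Function.comp_apply, hqd k, hrec]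
  have hHk : Tendsto (fun k => -(H (z k).1 (q k))) atTop (nhds (-(H t₀ Q))) := by
    have := ((hH.tendsto (t₀, Q)).comp (htk.prodMk_nhds hqt)).neg
    exact this
  have hPeq : P = derivPair (-(H t₀ Q)) Q := by
    have h1 : Tendsto (fun k => derivPair (-(H (z k).1 (q k))) (q k)) atTop
        (nhds (derivPair (-(H t₀ Q)) Q)) :=
      (derivPair_continuous.tendsto _).comp (hHk.prodMk_nhds hqt)
    have h2 : Tendsto (fun k => derivPair (-(H (z k).1 (q k))) (q k)) atTop (nhds P) :=
      hzd.congr fun k => hqd k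
    exact tendsto_nhds_unique h2 h1
  refine ⟨Q, ?_, hPeq⟩
  have hg : Continuous fun p : ℝ × EuclideanSpace ℝ (Fin n) =>
      ∫ τ in (0:ℝ)..p.1, H τ p.2 := by
    apply intervalIntegral.continuous_parametric_intervalIntegral_of_continuous
      (f := fun (p : ℝ × EuclideanSpace ℝ (Fin n)) (τ : ℝ) => H τ p.2)
      (μ := MeasureTheory.volume)
    · exact hH.comp (continuous_snd.prodMk continuous_fst.snd)
    · exact continuous_fst
  intro q'
  set s : ℕ → ℝ := fun k => ⟪(z k).2, q'⟫ - ∫ τ in (0:ℝ)..(z k).1, H τ q' with hsdef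
  set r : ℕ → ℝ := fun k => ⟪(z k).2, q k⟫ - ∫ τ in (0:ℝ)..(z k).1, H τ (q k) with hrdef
  set s₀ : ℝ := ⟪x₀, q'⟫ - ∫ τ in (0:ℝ)..t₀, H τ q' with hs0def
  set r₀ : ℝ := ⟪x₀, Q⟫ - ∫ τ in (0:ℝ)..t₀, H τ Q with hr0def
  have hcont2 : Continuous fun p : (ℝ × EuclideanSpace ℝ (Fin n)) × EuclideanSpace ℝ (Fin n) =>
      (⟪p.1.2, p.2⟫ : ℝ) - ∫ τ in (0:ℝ)..p.1.1, H τ p.2 :=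
    (Continuous.inner continuous_fst.snd continuous_snd).sub
      (hg.comp (continuous_fst.fst.prodMk continuous_snd))
  have hs : Tendsto s atTop (nhds s₀) := by
    have := (hcont2.tendsto ((t₀, x₀), q')).comp
      (hzt.prodMk_nhds (tendsto_const_nhds (x := q')))
    exact this
  have hr : Tendsto r atTop (nhds r₀) := by
    have := (hcont2.tendsto ((t₀, x₀), Q)).comp (hzt.prodMk_nhds hqt)
    exact this
  have hphi : ∀ (t : ℝ) (x q'' : EuclideanSpace ℝ (Fin n)),
      hopfPhi σ H t x q'' = ((⟪x, q''⟫ - ∫ τ in (0:ℝ)..t, H τ q'' : ℝ) : EReal)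
        - fenchelConj σ q'' := fun _ _ _ => rfl
  by_cases hq'top : fenchelConj σ q' = ⊤
  · rw [hphi, hq'top, EReal.sub_top]
    exact bot_le
  obtain ⟨c, hc⟩ : ∃ c : ℝ, fenchelConj σ q' = (c : EReal) := by
    lift fenchelConj σ q' to ℝ using ⟨hq'top, fenchelConj_ne_bot σ q'⟩ with c hc
    exact ⟨c, rfl⟩
  have hkey : ∀ k, fenchelConj σ (q k) ≤ ((r k - s k + c : ℝ) : EReal) := by
    intro k
    have hle := hqmem k q'
    rw [hphi, hphi, hc] at hle
    rcases eq_or_ne (fenchelConj σ (q k)) ⊤ with htop | htop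
    · rw [htop, EReal.sub_top] at hle
      exact absurd (le_bot_iff.1 hle) (EReal.coe_ne_bot _)
    · obtain ⟨ck, hck⟩ : ∃ ck : ℝ, fenchelConj σ (q k) = (ck : EReal) := by
        lift fenchelConj σ (q k) to ℝ using ⟨htop, fenchelConj_ne_bot σ (q k)⟩ with ck hck
        exact ⟨ck, rfl⟩
      rw [hck] at hle ⊢
      rw [← EReal.coe_sub, ← EReal.coe_sub, EReal.coe_le_coe_iff] at hle
      rw [EReal.coe_le_coe_iff]
      have hle' : s k - c ≤ r k - ck := hle
      linarith
  have hlsc : fenchelConj σ Q ≤ atTop.liminf fun k => fenchelConj σ (q k) := by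
    rw [le_liminf_iff]
    intro y hy
    exact hqt.eventually (fenchelConj_lsc σ Q y hy)
  have hlim : Tendsto (fun k => ((r k - s k + c : ℝ) : EReal)) atTop
      (nhds ((r₀ - s₀ + c : ℝ) : EReal)) :=
    (continuous_coe_real_ereal.tendsto _).comp ((hr.sub hs).add_const c)
  have hQbound : fenchelConj σ Q ≤ ((r₀ - s₀ + c : ℝ) : EReal) := by
    refine hlsc.trans ?_
    have h1 : (atTop.liminf fun k => fenchelConj σ (q k)) ≤
        atTop.liminf fun k => ((r k - s k + c : ℝ) : EReal) :=
      liminf_le_liminf (Eventually.of_forall hkey)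
    rw [hlim.liminf_eq] at h1
    exact h1
  obtain ⟨d, hd'⟩ : ∃ d : ℝ, fenchelConj σ Q = (d : EReal) := by
    have hQtop : fenchelConj σ Q ≠ ⊤ := by
      intro h
      rw [h] at hQbound
      exact absurd (top_le_iff.1 hQbound) (EReal.coe_ne_top _)
    lift fenchelConj σ Q to ℝ using ⟨hQtop, fenchelConj_ne_bot σ Q⟩ with d hd'
    exact ⟨d, rfl⟩
  rw [hd'] at hQbound
  rw [EReal.coe_le_coe_iff] at hQbound
  rw [hphi, hphi, hc, hd', ← EReal.coe_sub, ← EReal.coe_sub, EReal.coe_le_coe_iff]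
  have hs0 : (⟪x₀, q'⟫ : ℝ) - ∫ τ in (0:ℝ)..t₀, H τ q' = s₀ := rfl
  have hr0 : (⟪x₀, Q⟫ : ℝ) - ∫ τ in (0:ℝ)..t₀, H τ Q = r₀ := rfl
  rw [hs0, hr0]
  linarith
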